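/- Define vector polynomials Q_{n,m} recursively by Q_{n,0} = P_nᵗ (a row vector of n+1 polynomials of degree n in two variables with leading coefficient G_{n,0,n} = I_{n+1}) and Q_{n,m} = ∇(Q_{n+1,m-1}). If Q_{n,m} is expanded as Q_{n,m}(x,y) = Σ_{k=0}^{n} (I_{2^m} ⊗ X_kᵗ) G_{n,m,k}, then the leading coefficients satisfy the recurrence G_{n,m,n} = diag(I_{2^{m-1}} ⊗ N_{n+1,1}, I_{2^{m-1}} ⊗ N_{n+1,2}) · (G_{n+1,m-1,n+1}; G_{n+1,m-1,n+1}) for m ≥ 1, where the last factor is the vertical stack of two copies of G_{n+1,m-1,n+1}. -/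

import Mathlib

/-!
Only the top-degree part of each entry matters: by `hexp`, the coefficient of `x^(n-j) y^j` in
an entry of `Q n m` is the matching entry of `G n m n`. Differentiating in `x` (resp. `y`) turns
the coefficient of `x^(n+1-j) y^j` (resp. `x^(n-j) y^(j+1)`) in `Q (n+1) m`, times `n+1-j`
(resp. `j+1`), into that of `x^(n-j) y^j`; these factors are exactly the entries of
`Nr1 (n+1)` and `Nr2 (n+1)`.
-/

open Matrix MvPolynomial
open scoped Kronecker

noncomputable section

abbrev P2 : Type := MvPolynomial (Fin 2) ℝ

/-- The row vector `X_kᵗ` of monomials of total degree `k`. -/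
def Xrow (k : ℕ) : Matrix (Fin 1) (Fin (k + 1)) P2 :=
  Matrix.of fun _ j => X 0 ^ (k - (j : ℕ)) * X 1 ^ (j : ℕ)

/-- `N_{s,1}`, the `s × (s+1)` real matrix with entries `(s+1-i)δ_{ij}` (one-based). -/
def Nr1 (s : ℕ) : Matrix (Fin s) (Fin (s + 1)) ℝ :=
  Matrix.of fun i j => if (i : ℕ) = (j : ℕ) then ((s - (i : ℕ) : ℕ) : ℝ) else 0

/-- `N_{s,2}`, the `s × (s+1)` real matrix with entries `i·δ_{i+1,j}` (one-based). -/
def Nr2 (s : ℕ) : Matrix (Fin s) (Fin (s + 1)) ℝ :=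
  Matrix.of fun i j => if (i : ℕ) + 1 = (j : ℕ) then (((i : ℕ) + 1 : ℕ) : ℝ) else 0

/-- The summand `(I_{2^m} ⊗ X_kᵗ) G` of the expansion of `Q_{n,m}`. -/
def termM (n m k : ℕ) (Gmat : Matrix (Fin (2 ^ m) × Fin (k + 1)) (Fin (n + m + 1)) ℝ) :
    Matrix (Fin (2 ^ m)) (Fin (n + m + 1)) P2 :=
  (((1 : Matrix (Fin (2 ^ m)) (Fin (2 ^ m)) P2) ⊗ₖ Xrow k)
      * Gmat.map MvPolynomial.C).submatrix (fun i => (i, (0 : Fin 1))) id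

/-- The canonical equivalence `Fin 2 × Fin (2^m) ≃ Fin (2^(m+1))`. -/
def eqv (m : ℕ) : Fin 2 × Fin (2 ^ m) ≃ Fin (2 ^ (m + 1)) :=
  finProdFinEquiv.trans (finCongr (by ring))

section Monomials

variable {R : Type*} [CommSemiring R]

def xyExp (a b : ℕ) : Fin 2 →₀ ℕ := Finsupp.single 0 a + Finsupp.single 1 b

@[simp] lemma xyExp_apply_zero (a b : ℕ) : xyExp a b 0 = a := by simp [xyExp]

@[simp] lemma xyExp_apply_one (a b : ℕ) : xyExp a b 1 = b := by simp [xyExp]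

lemma xyExp_inj {a b c d : ℕ} : xyExp a b = xyExp c d ↔ a = c ∧ b = d := by
  refine ⟨fun h => ⟨?_, ?_⟩, fun ⟨hac, hbd⟩ => hac ▸ hbd ▸ rfl⟩
  · simpa using DFunLike.congr_fun h 0
  · simpa using DFunLike.congr_fun h 1

lemma xyExp_add_single_zero (a b : ℕ) : xyExp a b + Finsupp.single 0 1 = xyExp (a + 1) b := by
  ext x; fin_cases x <;> simp [xyExp]

lemma xyExp_add_single_one (a b : ℕ) : xyExp a b + Finsupp.single 1 1 = xyExp a (b + 1) := by
  ext x; fin_cases x <;> simp [xyExp]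

lemma X_pow_mul_X_pow_mul_C (a b : ℕ) (r : R) :
    (X 0 ^ a * X 1 ^ b : MvPolynomial (Fin 2) R) * C r = monomial (xyExp a b) r := by
  rw [X_pow_eq_monomial, X_pow_eq_monomial, C_apply, monomial_mul, monomial_mul]
  simp [xyExp]

lemma coeff_xyExp_pderiv_zero (q : MvPolynomial (Fin 2) R) (a b : ℕ) :
    coeff (xyExp a b) (pderiv 0 q) = coeff (xyExp (a + 1) b) q * (a + 1) := by
  rw [coeff_pderiv, xyExp_add_single_zero, xyExp_apply_zero]

lemma coeff_xyExp_pderiv_one (q : MvPolynomial (Fin 2) R) (a b : ℕ) :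
    coeff (xyExp a b) (pderiv 1 q) = coeff (xyExp a (b + 1)) q * (b + 1) := by
  rw [coeff_pderiv, xyExp_add_single_one, xyExp_apply_one]

end Monomials

section Expansion

variable {n m k : ℕ}

lemma termM_apply (Gm : Matrix (Fin (2 ^ m) × Fin (k + 1)) (Fin (n + m + 1)) ℝ)
    (i : Fin (2 ^ m)) (c : Fin (n + m + 1)) :
    termM n m k Gm i c = ∑ j : Fin (k + 1), monomial (xyExp (k - j) j) (Gm (i, j) c) := by
  change (∑ x, ((1 : Matrix (Fin (2 ^ m)) (Fin (2 ^ m)) P2) ⊗ₖ Xrow k) (i, 0) x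
    * C (Gm x c)) = _
  rw [Fintype.sum_prod_type, Finset.sum_eq_single i]
  · simp [Xrow, X_pow_mul_X_pow_mul_C]
  · intro x _ hx
    simp [one_apply_ne (Ne.symm hx)]
  · simp

lemma coeff_xyExp_termM (Gm : Matrix (Fin (2 ^ m) × Fin (k + 1)) (Fin (n + m + 1)) ℝ)
    (i : Fin (2 ^ m)) (c : Fin (n + m + 1)) (a b : ℕ) :
    coeff (xyExp a b) (termM n m k Gm i c)
      = if h : a + b = k then Gm (i, ⟨b, by omega⟩) c else 0 := by
  simp only [termM_apply, coeff_sum, coeff_monomial, xyExp_inj]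
  split_ifs with h
  · rw [Finset.sum_eq_single ⟨b, by omega⟩] <;> grind
  · exact Finset.sum_eq_zero fun j _ => if_neg (by omega)

lemma coeff_xyExp_sum_termM
    (Gk : (k : ℕ) → Matrix (Fin (2 ^ m) × Fin (k + 1)) (Fin (n + m + 1)) ℝ)
    (i : Fin (2 ^ m)) (c : Fin (n + m + 1)) (j : Fin (n + 1)) :
    coeff (xyExp (n - j) j) ((∑ k ∈ Finset.range (n + 1), termM n m k (Gk k)) i c)
      = Gk n (i, j) c := by
  simp only [Matrix.sum_apply, coeff_sum, coeff_xyExp_termM]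
  rw [Finset.sum_eq_single n (fun k _ hk => dif_neg (by omega)) (by simp), dif_pos (by omega)]

end Expansion

lemma sum_Nr1_mul (s : ℕ) (r : Fin s) (v : Fin (s + 1) → ℝ) :
    ∑ c, Nr1 s r c * v c = (s - r : ℕ) * v r.castSucc := by
  rw [Finset.sum_eq_single r.castSucc (fun c _ hc => by simp [Nr1, Fin.ext_iff] at hc ⊢; grind)
    (by simp)]
  simp [Nr1]

lemma sum_Nr2_mul (s : ℕ) (r : Fin s) (v : Fin (s + 1) → ℝ) :
    ∑ c, Nr2 s r c * v c = (r + 1 : ℕ) * v r.succ := by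
  rw [Finset.sum_eq_single r.succ (fun c _ hc => by simp [Nr2, Fin.ext_iff] at hc ⊢; grind)
    (by simp)]
  simp [Nr2]

/-- Recurrence for the leading coefficients of the gradient families
`Q_{n,0} = P_nᵗ`, `Q_{n,m} = ∇(Q_{n+1,m-1})`: if `Q_{n,m} = Σ_{k≤n} (I_{2^m} ⊗ X_kᵗ) G_{n,m,k}`
with `G_{n,0,n} = I_{n+1}`, then
`G_{n,m,n} = diag(I_{2^{m-1}} ⊗ N_{n+1,1}, I_{2^{m-1}} ⊗ N_{n+1,2}) · (G_{n+1,m-1,n+1} ; G_{n+1,m-1,n+1})`. -/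
theorem leading_coeff_recurrence
    (Q : (n m : ℕ) → Matrix (Fin (2 ^ m)) (Fin (n + m + 1)) P2)
    (G : (n m k : ℕ) → Matrix (Fin (2 ^ m) × Fin (k + 1)) (Fin (n + m + 1)) ℝ)
    (hexp : ∀ n m, Q n m = ∑ k ∈ Finset.range (n + 1), termM n m k (G n m k))
    (hrec : ∀ n m, Q n (m + 1)
      = (Matrix.of fun (r : Fin 2 × Fin (2 ^ m)) (j : Fin (n + 1 + m + 1)) =>
          (if r.1 = 0 then pderiv (0 : Fin 2) else pderiv 1) (Q (n + 1) m r.2 j)).submatrix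
            (eqv m).symm (Fin.cast (by omega)))
    (n k : ℕ) :
    G n (k + 1) n
      = ((Matrix.of fun (r : (Fin 2 × Fin (2 ^ k)) × Fin (n + 1))
              (c : (Fin 2 × Fin (2 ^ k)) × Fin (n + 2)) =>
            if r.1 = c.1 then
              (if r.1.1 = 0 then Nr1 (n + 1) r.2 c.2 else Nr2 (n + 1) r.2 c.2)
            else (0 : ℝ))
          * Matrix.of fun (r : (Fin 2 × Fin (2 ^ k)) × Fin (n + 2))
              (j : Fin (n + (k + 1) + 1)) =>
            G (n + 1) k (n + 1) (r.1.2, r.2) (Fin.cast (by omega) j)).submatrix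
          (fun p : Fin (2 ^ (k + 1)) × Fin (n + 1) => ((eqv k).symm p.1, p.2)) id := by
  ext ⟨p, j⟩ c
  obtain ⟨⟨d, i⟩, rfl⟩ : ∃ r, p = eqv k r := ⟨(eqv k).symm p, by simp⟩
  rw [← coeff_xyExp_sum_termM (G n (k + 1)), ← hexp, hrec]
  simp only [submatrix_apply, of_apply, Equiv.symm_apply_apply, id, mul_apply]
  rw [Fintype.sum_prod_type, Finset.sum_eq_single (d, i) (fun b _ hb => by simp [Ne.symm hb])
    (by simp)]
  have hleading := coeff_xyExp_sum_termM (G (n + 1) k) i (Fin.cast (by omega) c)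
  simp only [← hexp] at hleading
  fin_cases d <;> simp only [Fin.zero_eta, Fin.mk_one, if_true, one_ne_zero, if_false]
  · rw [coeff_xyExp_pderiv_zero, sum_Nr1_mul, ← hleading j.castSucc, Fin.val_castSucc,
      show n + 1 - j = n - j + 1 by omega]
    push_cast
    ring
  · rw [coeff_xyExp_pderiv_one, sum_Nr2_mul, ← hleading j.succ, Fin.val_succ,
      Nat.add_sub_add_right]
    push_cast
    ring

end
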